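/- Let n ≥ 2 and let 𝔲 ⊆ sl_n(ℂ) be the Lie subalgebra spanned by the elementary matrices E_{1j}, 2 ≤ j ≤ n. Let 𝔥 ⊆ sl_n(ℂ) be a Lie subalgebra containing 𝔲, and suppose there exists a linear subspace 𝔥' ⊆ sl_n(ℂ) such that sl_n(ℂ) = 𝔥 ⊕ 𝔥' as vector spaces and [X, Y] ∈ 𝔥' for every X ∈ 𝔥 and Y ∈ 𝔥' (i.e., 𝔥' is a complement of 𝔥 which is invariant under the adjoint action of 𝔥). Then 𝔥 = sl_n(ℂ). -/

import Mathlib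

/-!
Let `Y` lie in the invariant complement `𝔥'`. Each `E_{1j}` lies in `𝔲 ⊆ 𝔥`, so it preserves
`𝔥'`, and any element of `𝔥'` that falls into `𝔲` vanishes. First
`ad(E_{1j})² Y = -2 Y_{j1} E_{1j} ∈ 𝔲` kills the first column of `Y` below the diagonal; then
`[E_{1j}, Y]` itself lies in `𝔲`, so it vanishes, which forces `Y` to agree with `Y_{11} • 1`
outside its first row. Trace zero gives `Y_{11} = 0`, so `Y ∈ 𝔲 ∩ 𝔥' = 0`. Hence `𝔥' = 0` and
`𝔥 = sl_n(ℂ)`.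
-/

attribute [local instance 100] LieRing.ofAssociativeRing

namespace Matrix

section Bracket

variable {ι R : Type*} [Fintype ι] [DecidableEq ι] [Ring R]

theorem lie_single_apply (i j : ι) (c : R) (Y : Matrix ι ι R) (a b : ι) :
    ⁅single i j c, Y⁆ a b =
      (if a = i then c * Y j b else 0) - (if b = j then Y a i * c else 0) := by
  rw [Ring.lie_def, sub_apply]
  congr 1
  · split_ifs with ha
    · rw [ha, single_mul_apply_same]
    · exact single_mul_apply_of_ne _ _ _ _ _ ha _
  · split_ifs with hb
    · rw [hb, mul_single_apply_same]
    · exact mul_single_apply_of_ne _ _ _ _ _ hb _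

theorem lie_single_lie_single_of_ne {i j : ι} (hij : i ≠ j) (c : R) (Y : Matrix ι ι R) :
    ⁅single i j c, ⁅single i j c, Y⁆⁆ = (-2 : R) • single i j (c * Y j i * c) := by
  have hsq : single i j c * single i j c = 0 := single_mul_single_of_ne _ _ _ _ hij.symm _
  rw [← single_mul_mul_single]
  simp only [Ring.lie_def, mul_sub, sub_mul, ← mul_assoc, hsq, zero_mul]
  rw [mul_assoc Y, hsq, mul_zero, neg_smul, two_smul]
  abel

end Bracket

section OffDiagRow

variable (K : Type*) {ι : Type*} [Semiring K] [DecidableEq ι]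

/-- The paper's `𝔲` is `offDiagRow ℂ 0`. -/
def offDiagRow (i : ι) : Submodule K (Matrix ι ι K) :=
  Submodule.span K (Set.range fun j : {j // j ≠ i} => single i j (1 : K))

variable {K}

theorem single_mem_offDiagRow {i j : ι} (hj : j ≠ i) (c : K) :
    single i j c ∈ offDiagRow K i := by
  have hone : single i j (1 : K) ∈ offDiagRow K i := Submodule.subset_span ⟨⟨j, hj⟩, rfl⟩
  simpa [smul_single] using Submodule.smul_mem _ c hone

variable [Fintype ι]

theorem mem_offDiagRow_of_apply_eq_zero {i : ι} {M : Matrix ι ι K}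
    (hrow : ∀ a ≠ i, ∀ b, M a b = 0) (hdiag : M i i = 0) : M ∈ offDiagRow K i := by
  have hM : M = ∑ b, M i b • single i b 1 := by
    nth_rw 1 [matrix_eq_sum_single M]
    rw [Finset.sum_eq_single i]
    · simp [smul_single]
    · intro a _ ha
      simp [hrow a ha]
    · simp
  rw [hM]
  refine Submodule.sum_mem _ fun b _ => ?_
  by_cases hb : b = i
  · simp [hb, hdiag]
  · exact Submodule.smul_mem _ _ (single_mem_offDiagRow hb _)

end OffDiagRow

section Complement

variable {K ι : Type*} [Field K] [CharZero K] [Fintype ι] [DecidableEq ι]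

theorem eq_bot_of_disjoint_offDiagRow {i : ι} {V : Submodule K (Matrix ι ι K)}
    (htrace : ∀ Y ∈ V, trace Y = 0) (hdisj : Disjoint (offDiagRow K i) V)
    (hlie : ∀ j ≠ i, ∀ Y ∈ V, ⁅single i j (1 : K), Y⁆ ∈ V) : V = ⊥ := by
  rw [Submodule.eq_bot_iff]
  intro Y hY
  have hzero : ∀ M ∈ offDiagRow K i, M ∈ V → M = 0 := Submodule.disjoint_def.mp hdisj
  have hcol : ∀ a ≠ i, Y a i = 0 := by
    intro a ha
    have hV := hlie a ha _ (hlie a ha Y hY)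
    rw [lie_single_lie_single_of_ne ha.symm] at hV
    have h := hzero _ (Submodule.smul_mem _ _ (single_mem_offDiagRow ha _)) hV
    simpa using congr_fun (congr_fun h i) a
  have hrow : ∀ a ≠ i, ∀ b, Y a b = if b = a then Y i i else 0 := by
    intro a ha b
    have hmem : ⁅single i a (1 : K), Y⁆ ∈ offDiagRow K i :=
      mem_offDiagRow_of_apply_eq_zero (fun c hc d => by simp [lie_single_apply, hc, hcol c hc])
        (by simp [lie_single_apply, hcol a ha, ha.symm])
    have h := congr_fun (congr_fun (hzero _ hmem (hlie a ha Y hY)) i) b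
    simpa [lie_single_apply, sub_eq_zero] using h
  have hii : Y i i = 0 := by
    have hdiag : ∀ a, Y a a = Y i i := fun a => by
      by_cases ha : a = i
      · rw [ha]
      · simp [hrow a ha]
    have htr : (Fintype.card ι : K) * Y i i = 0 := by
      rw [← htrace Y hY, trace, ← nsmul_eq_mul, ← Finset.card_univ, ← Finset.sum_const]
      simp [hdiag]
    have : Nonempty ι := ⟨i⟩
    simpa [Fintype.card_ne_zero] using htr
  exact hzero Y
    (mem_offDiagRow_of_apply_eq_zero (fun a ha b => by simp [hrow a ha b, hii]) hii) hY

end Complement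

end Matrix

/-- For `n ≥ 2`, let `𝔥` be a Lie subalgebra of `sl_n(ℂ)` containing the
Lie subalgebra `𝔲` spanned by the elementary matrices `E 0 j` (`j ≠ 0`), and suppose `𝔥`
admits a vector-space complement `𝔥'` inside `sl_n(ℂ)` with `⁅𝔥, 𝔥'⁆ ⊆ 𝔥'`.
Then `𝔥 = sl_n(ℂ)`. -/
theorem stmt_5 (n : ℕ) (hn : 2 ≤ n)
    (H : LieSubalgebra ℂ (Matrix (Fin n) (Fin n) ℂ))
    (hU : ∀ j : Fin n, j ≠ ⟨0, by omega⟩ →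
      Matrix.single ⟨0, by omega⟩ j 1 ∈ H)
    (H' : Submodule ℂ (Matrix (Fin n) (Fin n) ℂ))
    (hH'sl : H' ≤ (LieAlgebra.SpecialLinear.sl (Fin n) ℂ).toSubmodule)
    (hdisj : H.toSubmodule ⊓ H' = ⊥)
    (hsup : H.toSubmodule ⊔ H' = (LieAlgebra.SpecialLinear.sl (Fin n) ℂ).toSubmodule)
    (hinv : ∀ X ∈ H, ∀ Y ∈ H', ⁅X, Y⁆ ∈ H') :
    H = LieAlgebra.SpecialLinear.sl (Fin n) ℂ := by
  have hUH : Matrix.offDiagRow ℂ ⟨0, by omega⟩ ≤ H.toSubmodule :=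
    Submodule.span_le.mpr (Set.range_subset_iff.mpr fun j => hU j j.2)
  have hH' : H' = ⊥ :=
    Matrix.eq_bot_of_disjoint_offDiagRow (fun Y hY => hH'sl hY)
      ((disjoint_iff.mpr hdisj).mono_left hUH) (fun j hj Y hY => hinv _ (hU j hj) Y hY)
  rw [hH', sup_bot_eq] at hsup
  exact LieSubalgebra.toSubmodule_injective hsup
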